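/- arXiv:2309.16412 — 3 statements merged into one kernel-verified Lean document; each statement's English description precedes it below -/
import Mathlib

section
/- Let B be a binomial random variable with parameters n and q ∈ (0,1], and let r be a positive integer. Then E[1/(r + B)^r] ≤ 1/((n+1)^r · q^r). -/
open Finset

lemma aux1 (k r : ℕ) : (k + r).factorial ≤ k.factorial * (r + k) ^ r := by
  induction r with
  | zero => simp
  | succ r ih =>
      have : (k + (r+1)).factorial = (k + r + 1) * (k + r).factorial := by
        rw [← Nat.add_assoc]; exact Nat.factorial_succ _
      rw [this, pow_succ]
      calc (k + r + 1) * (k + r).factorial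
          ≤ (k + r + 1) * (k.factorial * (r + k) ^ r) :=
            Nat.mul_le_mul_left _ ih
        _ ≤ (r + 1 + k) * (k.factorial * (r + 1 + k) ^ r) := by
            apply Nat.mul_le_mul (by omega)
            exact Nat.mul_le_mul_left _ (Nat.pow_le_pow_left (by omega) r)
        _ = k.factorial * ((r + 1 + k) ^ r * (r + 1 + k)) := by ring

lemma aux2 (n r : ℕ) : (n + 1) ^ r * n.factorial ≤ (n + r).factorial := by
  induction r with
  | zero => simp
  | succ r ih =>
      have : (n + (r+1)).factorial = (n + r + 1) * (n + r).factorial := by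
        rw [← Nat.add_assoc]; exact Nat.factorial_succ _
      rw [this, pow_succ]
      calc (n + 1) ^ r * (n + 1) * n.factorial
          = (n + 1) * ((n + 1) ^ r * n.factorial) := by ring
        _ ≤ (n + r + 1) * (n + r).factorial :=
            Nat.mul_le_mul (by omega) ih

lemma auxA (n k r : ℕ) (hk : k ≤ n) :
    n.choose k * (n + r).factorial
      ≤ (n + r).choose (k + r) * ((r + k) ^ r * n.factorial) := by
  have h1 : (n + r).choose (k + r) * (k + r).factorial * (n - k).factorial
      = (n + r).factorial := by
    have := Nat.choose_mul_factorial_mul_factorial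
      (show k + r ≤ n + r by omega)
    have hnk : n + r - (k + r) = n - k := by omega
    rwa [hnk] at this
  have h2 : n.choose k * k.factorial * (n - k).factorial = n.factorial :=
    Nat.choose_mul_factorial_mul_factorial hk
  calc n.choose k * (n + r).factorial
      = n.choose k * ((n + r).choose (k + r) * (k + r).factorial * (n - k).factorial) := by
        rw [h1]
    _ ≤ n.choose k * ((n + r).choose (k + r) * (k.factorial * (r + k) ^ r) * (n - k).factorial) := by
        apply Nat.mul_le_mul_left
        apply Nat.mul_le_mul_right
        exact Nat.mul_le_mul_left _ (aux1 k r)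
    _ = (n + r).choose (k + r) * ((r + k) ^ r * (n.choose k * k.factorial * (n - k).factorial)) := by
        ring
    _ = (n + r).choose (k + r) * ((r + k) ^ r * n.factorial) := by rw [h2]

/-- For a binomial random variable `B ~ Bin(n, q)` and a positive integer `r`,
`E[1/(r + B)^r] ≤ 1/((n+1)^r q^r)`. -/
theorem stmt2 (n : ℕ) (q : ℝ) (hq0 : 0 < q) (hq1 : q ≤ 1) (r : ℕ) (hr : 1 ≤ r) :
    ∑ k ∈ Finset.range (n + 1),
        (n.choose k : ℝ) * q ^ k * (1 - q) ^ (n - k) / ((r + k : ℝ) ^ r)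
      ≤ 1 / (((n : ℝ) + 1) ^ r * q ^ r) := by
  have h1q : (0:ℝ) ≤ 1 - q := by linarith
  have hfac : (0:ℝ) < (n + r).factorial := by positivity
  -- step 1: termwise bound
  have step1 : ∀ k ∈ Finset.range (n + 1),
      (n.choose k : ℝ) * q ^ k * (1 - q) ^ (n - k) / ((r + k : ℝ) ^ r)
        ≤ (n.factorial : ℝ) / (n + r).factorial *
            (((n + r).choose (k + r) : ℝ)) * (q ^ k * (1 - q) ^ (n - k)) := by
    intro k hk
    have hk' : k ≤ n := by simp at hk; omega
    have hA := auxA n k r hk'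
    have hpow : (0:ℝ) < (r + k : ℝ) ^ r := by positivity
    have hqq : (0:ℝ) ≤ q ^ k * (1 - q) ^ (n - k) := by positivity
    have key : (n.choose k : ℝ) / ((r + k : ℝ) ^ r)
        ≤ (n.factorial : ℝ) / (n + r).factorial * ((n + r).choose (k + r) : ℝ) := by
      have hre : (n.factorial : ℝ) / (n + r).factorial * ((n + r).choose (k + r) : ℝ)
          = ((n.factorial : ℝ) * ((n + r).choose (k + r) : ℝ)) / (n + r).factorial := by
        ring
      rw [hre, div_le_div_iff₀ hpow hfac]
      have := (Nat.cast_le (α := ℝ)).mpr hA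
      push_cast at this ⊢
      nlinarith [this]
    calc (n.choose k : ℝ) * q ^ k * (1 - q) ^ (n - k) / ((r + k : ℝ) ^ r)
        = ((n.choose k : ℝ) / ((r + k : ℝ) ^ r)) * (q ^ k * (1 - q) ^ (n - k)) := by
          ring
      _ ≤ ((n.factorial : ℝ) / (n + r).factorial * ((n + r).choose (k + r) : ℝ))
            * (q ^ k * (1 - q) ^ (n - k)) := by
          exact mul_le_mul_of_nonneg_right key hqq
      _ = _ := by ring
  have S1 := Finset.sum_le_sum step1
  -- step 2: the shifted binomial sum is at most 1
  have hT : ∑ k ∈ Finset.range (n + 1),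
      ((n + r).choose (k + r) : ℝ) * (q ^ (k + r) * (1 - q) ^ (n - k)) ≤ 1 := by
    have hbin : (1:ℝ) = ∑ j ∈ Finset.range (n + r + 1),
        q ^ j * (1 - q) ^ (n + r - j) * ((n + r).choose j : ℝ) := by
      have := add_pow q (1 - q) (n + r)
      simp only [add_sub_cancel, one_pow] at this
      rw [← this]
    have heq : ∑ k ∈ Finset.range (n + 1),
        ((n + r).choose (k + r) : ℝ) * (q ^ (k + r) * (1 - q) ^ (n - k))
        = ∑ j ∈ Finset.Ico r (r + (n + 1)),
            q ^ j * (1 - q) ^ (n + r - j) * ((n + r).choose j : ℝ) := by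
      rw [Finset.sum_Ico_eq_sum_range, Nat.add_sub_cancel_left]
      apply Finset.sum_congr rfl
      intro k hk
      simp only [Finset.mem_range] at hk
      have : n + r - (r + k) = n - k := by omega
      rw [this, add_comm r k]
      ring
    rw [heq]
    conv_rhs => rw [hbin]
    apply Finset.sum_le_sum_of_subset_of_nonneg
    · intro j hj
      simp only [Finset.mem_Ico, Finset.mem_range] at *
      omega
    · intro j _ _
      positivity
  -- combine
  have hqr : (0:ℝ) < q ^ r := by positivity
  calc ∑ k ∈ Finset.range (n + 1),
        (n.choose k : ℝ) * q ^ k * (1 - q) ^ (n - k) / ((r + k : ℝ) ^ r)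
      ≤ ∑ k ∈ Finset.range (n + 1),
          (n.factorial : ℝ) / (n + r).factorial *
            (((n + r).choose (k + r) : ℝ)) * (q ^ k * (1 - q) ^ (n - k)) := S1
    _ = (n.factorial : ℝ) / (n + r).factorial / q ^ r *
          ∑ k ∈ Finset.range (n + 1),
            ((n + r).choose (k + r) : ℝ) * (q ^ (k + r) * (1 - q) ^ (n - k)) := by
        rw [Finset.mul_sum]
        apply Finset.sum_congr rfl
        intro k _
        rw [pow_add]
        field_simp
    _ ≤ (n.factorial : ℝ) / (n + r).factorial / q ^ r * 1 := by
        apply mul_le_mul_of_nonneg_left hT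
        positivity
    _ ≤ 1 / (((n : ℝ) + 1) ^ r * q ^ r) := by
        rw [mul_one, div_div, div_le_div_iff₀ (by positivity) (by positivity)]
        have := (Nat.cast_le (α := ℝ)).mpr (aux2 n r)
        push_cast at this ⊢
        nlinarith [this, hqr]
end

section
/- Let X_1, …, X_n be points in ℝ^d, x ∈ ℝ^d, h > 0, and let K : ℝ^d → ℝ≥0 satisfy K(t) ≤ R_K e^{−r_K‖t‖}. Define weights ω_i = K((X_i − x)/h) / Σ_j K((X_j − x)/h) (assume the denominator is positive). Let g : ℝ^d → ℝ be L-Lipschitz and let s ≥ 1 be an integer. Then Σ_{i=1}^n |g(X_i) − g(x)|^s ω_i ≤ (2 L^s h^s / r_K^s) · max(s, log(n R_K / Σ_j K((X_j − x)/h)))^s. -/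
open Finset

lemma aux_exp_mono (s : ℕ) (m v : ℝ) (hm0 : 0 < m) (hsm : (s : ℝ) ≤ m) (hmv : m ≤ v) :
    v ^ s * Real.exp (-v) ≤ m ^ s * Real.exp (-m) := by
  have hv0 : 0 < v := lt_of_lt_of_le hm0 hmv
  have h1 : v / m ≤ Real.exp (v / m - 1) := by
    have := Real.add_one_le_exp (v / m - 1); linarith
  have h2 : (v / m) ^ s ≤ Real.exp ((s : ℝ) * (v / m - 1)) := by
    calc (v / m) ^ s ≤ (Real.exp (v / m - 1)) ^ s :=
          pow_le_pow_left₀ (by positivity) h1 s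
      _ = Real.exp ((s : ℝ) * (v / m - 1)) := by
          rw [← Real.exp_nat_mul]
  have h3 : (s : ℝ) * (v / m - 1) - v ≤ -m := by
    have h4 : (s : ℝ) * (v / m - 1) ≤ v - m := by
      rw [show v / m - 1 = (v - m) / m by field_simp, mul_div_assoc', div_le_iff₀ hm0]
      nlinarith
    linarith
  calc v ^ s * Real.exp (-v) = m ^ s * ((v / m) ^ s * Real.exp (-v)) := by
        rw [div_pow]; field_simp
    _ ≤ m ^ s * (Real.exp ((s : ℝ) * (v / m - 1)) * Real.exp (-v)) := by
        apply mul_le_mul_of_nonneg_left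
          (mul_le_mul_of_nonneg_right h2 (Real.exp_nonneg _)) (by positivity)
    _ = m ^ s * Real.exp ((s : ℝ) * (v / m - 1) - v) := by
        rw [← Real.exp_add]; ring_nf
    _ ≤ m ^ s * Real.exp (-m) :=
        mul_le_mul_of_nonneg_left (Real.exp_le_exp.mpr h3) (by positivity)

/-- Deterministic bound on weighted Lipschitz deviations for Nadaraya–Watson weights:
`Σ_i |g(X_i) − g(x)|^s ω_i ≤ (2 L^s h^s / r_K^s) max(s, log(n R_K / S))^s`. -/
theorem stmt5 (d n : ℕ) (X : Fin n → EuclideanSpace ℝ (Fin d))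
    (x : EuclideanSpace ℝ (Fin d)) (h : ℝ) (hh : 0 < h)
    (K : EuclideanSpace ℝ (Fin d) → ℝ) (RK rK : ℝ) (hRK : 0 < RK) (hrK : 0 < rK)
    (hK0 : ∀ t, 0 ≤ K t) (hK : ∀ t, K t ≤ RK * Real.exp (-rK * ‖t‖))
    (S : ℝ) (hS : S = ∑ j, K ((h : ℝ)⁻¹ • (X j - x))) (hSpos : 0 < S)
    (g : EuclideanSpace ℝ (Fin d) → ℝ) (L : ℝ) (hL : 0 ≤ L)
    (hg : ∀ y z, |g y - g z| ≤ L * ‖y - z‖)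
    (s : ℕ) (hs : 1 ≤ s) :
    ∑ i, |g (X i) - g x| ^ s * (K ((h : ℝ)⁻¹ • (X i - x)) / S)
      ≤ 2 * L ^ s * h ^ s / rK ^ s * max (s : ℝ) (Real.log (n * RK / S)) ^ s := by
  have hn : 0 < n := by
    rcases Nat.eq_zero_or_pos n with h0 | h0
    · subst h0; simp at hS; linarith
    · exact h0
  have hn' : (0 : ℝ) < n := by exact_mod_cast hn
  set m : ℝ := max (s : ℝ) (Real.log (n * RK / S)) with hm
  have hms : (s : ℝ) ≤ m := le_max_left _ _
  have hm1 : (1 : ℝ) ≤ m := le_trans (by exact_mod_cast hs) hms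
  have hm0 : 0 < m := by linarith
  set C : ℝ := L ^ s * h ^ s / rK ^ s with hC
  have hC0 : 0 ≤ C := by positivity
  have hexpm : Real.exp (-m) ≤ S / (n * RK) := by
    have hpos : (0 : ℝ) < n * RK / S := by positivity
    have hlog : Real.log (n * RK / S) ≤ m := le_max_right _ _
    calc Real.exp (-m) ≤ Real.exp (-(Real.log (n * RK / S))) :=
          Real.exp_le_exp.mpr (by linarith)
      _ = (n * RK / S)⁻¹ := by rw [Real.exp_neg, Real.exp_log hpos]
      _ = S / (n * RK) := by rw [inv_div]
  have key : ∀ i : Fin n, |g (X i) - g x| ^ s * (K ((h : ℝ)⁻¹ • (X i - x)) / S)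
      ≤ C * m ^ s * (K ((h : ℝ)⁻¹ • (X i - x)) / S + 1 / n) := by
    intro i
    set Ki := K ((h : ℝ)⁻¹ • (X i - x)) with hKi
    set t := ‖(h : ℝ)⁻¹ • (X i - x)‖ with hT
    have ht0 : 0 ≤ t := norm_nonneg _
    have hKi0 : 0 ≤ Ki := hK0 _
    have hKiS : 0 ≤ Ki / S := div_nonneg hKi0 hSpos.le
    have hnormt : ‖X i - x‖ = h * t := by
      rw [hT, norm_smul, norm_inv, Real.norm_eq_abs, abs_of_pos hh]
      field_simp
    have hgi : |g (X i) - g x| ≤ L * (h * t) := by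
      have := hg (X i) x
      rw [hnormt] at this; linarith
    have habs0 : 0 ≤ |g (X i) - g x| := abs_nonneg _
    have hgis : |g (X i) - g x| ^ s ≤ (L * (h * t)) ^ s :=
      pow_le_pow_left₀ habs0 hgi s
    by_cases hc : rK * t ≤ m
    · -- small t: use t ≤ m / rK
      have htm : t ≤ m / rK := (le_div_iff₀' hrK).mpr hc
      have h1 : (L * (h * t)) ^ s ≤ C * m ^ s := by
        have : L * (h * t) ≤ L * (h * (m / rK)) := by
          apply mul_le_mul_of_nonneg_left _ hL
          exact mul_le_mul_of_nonneg_left htm hh.le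
        calc (L * (h * t)) ^ s ≤ (L * (h * (m / rK))) ^ s :=
              pow_le_pow_left₀ (by positivity) this s
          _ = C * m ^ s := by
              rw [hC, mul_pow, mul_pow, div_pow]; ring
      calc |g (X i) - g x| ^ s * (Ki / S) ≤ (C * m ^ s) * (Ki / S) :=
            mul_le_mul_of_nonneg_right (le_trans hgis h1) hKiS
        _ ≤ C * m ^ s * (Ki / S + 1 / n) := by
            apply mul_le_mul_of_nonneg_left _ (by positivity)
            have : (0 : ℝ) ≤ 1 / n := by positivity
            linarith
    · -- large t
      push_neg at hc
      set v : ℝ := rK * t with hv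
      have hmv : m ≤ v := hc.le
      have hKiv : Ki ≤ RK * Real.exp (-v) := by
        have := hK ((h : ℝ)⁻¹ • (X i - x))
        rw [← hT, ← hKi] at this
        convert this using 3; rw [hv]; ring
      have hstep : v ^ s * Ki ≤ m ^ s * (S / n) := by
        calc v ^ s * Ki ≤ v ^ s * (RK * Real.exp (-v)) :=
              mul_le_mul_of_nonneg_left hKiv (by positivity)
          _ = RK * (v ^ s * Real.exp (-v)) := by ring
          _ ≤ RK * (m ^ s * Real.exp (-m)) :=
              mul_le_mul_of_nonneg_left (aux_exp_mono s m v hm0 hms hmv) hRK.le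
          _ ≤ RK * (m ^ s * (S / (n * RK))) := by
              apply mul_le_mul_of_nonneg_left _ hRK.le
              exact mul_le_mul_of_nonneg_left hexpm (by positivity)
          _ = m ^ s * (S / n) := by field_simp
      have hpow : (L * (h * t)) ^ s = C * (v ^ s) := by
        rw [hC, hv, mul_pow, mul_pow, mul_pow]
        field_simp
      calc |g (X i) - g x| ^ s * (Ki / S) ≤ (L * (h * t)) ^ s * (Ki / S) :=
            mul_le_mul_of_nonneg_right hgis hKiS
        _ = C * (v ^ s * Ki) / S := by rw [hpow]; ring
        _ ≤ C * (m ^ s * (S / n)) / S := by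
            gcongr
        _ = C * m ^ s * (1 / n) := by field_simp
        _ ≤ C * m ^ s * (Ki / S + 1 / n) := by
            apply mul_le_mul_of_nonneg_left _ (by positivity)
            linarith
  have hsum1 : ∑ i : Fin n, K ((h : ℝ)⁻¹ • (X i - x)) / S = 1 := by
    rw [← Finset.sum_div, ← hS, div_self (ne_of_gt hSpos)]
  calc ∑ i, |g (X i) - g x| ^ s * (K ((h : ℝ)⁻¹ • (X i - x)) / S)
      ≤ ∑ i, C * m ^ s * (K ((h : ℝ)⁻¹ • (X i - x)) / S + 1 / n) :=
        Finset.sum_le_sum fun i _ => key i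
    _ = C * m ^ s * (∑ i : Fin n, (K ((h : ℝ)⁻¹ • (X i - x)) / S + 1 / n)) := by
        rw [Finset.mul_sum]
    _ = C * m ^ s * 2 := by
        rw [Finset.sum_add_distrib, hsum1, Finset.sum_const, card_univ, Fintype.card_fin,
          nsmul_eq_mul, mul_one_div, div_self (ne_of_gt hn')]
        ring
    _ = 2 * L ^ s * h ^ s / rK ^ s * m ^ s := by rw [hC]; ring
end

section
/- Let ω ∈ ℝ^n have nonnegative entries summing to 1 and σ² ∈ ℝ^n have nonnegative entries. Let Σ = D_{σ²}(D_ω − ωω^T). Then Tr(Σ²) ≤ 2 Σ_i σ⁴_i ω_i², where σ⁴_i = (σ²_i)². -/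
open Finset

/-- For `Σ = D_{σ²}(D_ω − ωω^T)` with probability weights `ω` and nonnegative `σ²`,
`Tr(Σ²) ≤ 2 Σ_i σ⁴_i ω_i²`. -/
theorem stmt11 (n : ℕ) (w s : Fin n → ℝ)
    (hw0 : ∀ i, 0 ≤ w i) (hw1 : ∑ i, w i = 1) (hs0 : ∀ i, 0 ≤ s i) :
    ((Matrix.diagonal s * (Matrix.diagonal w - Matrix.vecMulVec w w)) ^ 2).trace
      ≤ 2 * ∑ i, (s i) ^ 2 * (w i) ^ 2 := by
  have htr : ((Matrix.diagonal s * (Matrix.diagonal w - Matrix.vecMulVec w w)) ^ 2).trace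
      = ∑ i, ∑ j, (s i * ((if i = j then w i else 0) - w i * w j)) *
        (s j * ((if j = i then w j else 0) - w j * w i)) := by
    rw [sq, Matrix.trace]
    simp [Matrix.mul_apply, Matrix.diagonal_apply, Matrix.vecMulVec_apply, Matrix.diag,
      Finset.mul_sum, ite_mul, mul_ite, sub_mul, mul_sub]
  have hterm : ∀ i j : Fin n, (s i * ((if i = j then w i else 0) - w i * w j)) *
        (s j * ((if j = i then w j else 0) - w j * w i))
      = s i * w i ^ 2 * (s j * w j ^ 2) +
        (if i = j then s i ^ 2 * w i ^ 2 - 2 * (s i ^ 2 * w i ^ 3) else 0) := by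
    intro i j
    rcases eq_or_ne i j with h | h
    · subst h; simp; ring
    · simp [h, h.symm]; ring
  have hsplit : (∑ i, ∑ j, (s i * w i ^ 2 * (s j * w j ^ 2) +
        (if i = j then s i ^ 2 * w i ^ 2 - 2 * (s i ^ 2 * w i ^ 3) else 0)))
      = (∑ i, s i * w i ^ 2) * (∑ j, s j * w j ^ 2) +
        ∑ i, (s i ^ 2 * w i ^ 2 - 2 * (s i ^ 2 * w i ^ 3)) := by
    rw [Finset.sum_mul, ← Finset.sum_add_distrib]
    apply Finset.sum_congr rfl
    intro i _
    rw [Finset.sum_add_distrib, ← Finset.mul_sum, Finset.sum_ite_eq Finset.univ i,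
      if_pos (Finset.mem_univ i)]
  rw [htr]
  simp only [hterm]
  rw [hsplit]
  set A := ∑ i, s i ^ 2 * w i ^ 2 with hA
  set B := ∑ i, s i ^ 2 * w i ^ 3 with hB
  set C := ∑ i, s i * w i ^ 2 with hC
  have hB0 : 0 ≤ B := Finset.sum_nonneg fun i _ =>
    mul_nonneg (sq_nonneg _) (pow_nonneg (hw0 i) 3)
  have hCS : C ^ 2 ≤ A * ∑ i, w i ^ 2 := by
    calc C ^ 2 = (∑ i, (s i * w i) * w i) ^ 2 := by
          rw [hC]; congr 1; exact Finset.sum_congr rfl fun i _ => by ring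
      _ ≤ (∑ i, (s i * w i) ^ 2) * ∑ i, w i ^ 2 := Finset.sum_mul_sq_le_sq_mul_sq _ _ _
      _ = A * ∑ i, w i ^ 2 := by
          rw [hA]; congr 1; exact Finset.sum_congr rfl fun i _ => by ring
  have hw2 : ∑ i, w i ^ 2 ≤ 1 := by
    calc ∑ i, w i ^ 2 ≤ (∑ i, w i) ^ 2 := Finset.sum_sq_le_sq_sum_of_nonneg (fun i _ => hw0 i)
      _ = 1 := by rw [hw1]; ring
  have hA0 : 0 ≤ A := Finset.sum_nonneg fun i _ =>
    mul_nonneg (sq_nonneg _) (sq_nonneg _)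
  have hCA : C ^ 2 ≤ A := le_trans hCS (by nlinarith)
  have hsum : ∑ i, (s i ^ 2 * w i ^ 2 - 2 * (s i ^ 2 * w i ^ 3)) = A - 2 * B := by
    rw [hA, hB, Finset.mul_sum, ← Finset.sum_sub_distrib]
  rw [hsum]
  nlinarith [hCA, hB0]
end
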